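/- arXiv:2106.01715 — 6 statements merged into one kernel-verified Lean document; each statement's English description precedes it below -/
import Mathlib

section
/- Let f be a function on (0,∞) of bounded variation, of rapid decay at infinity, O(u²) as u→0, with ∫₀^∞ f(t)dt = 0. Define E(f)(u) := u^{1/2}·∑_{n>0} f(nu). Then E(f)(u) is well-defined pointwise, is O(u^{1/2}) as u→0, and of rapid decay as u→∞. -/
/-!
When `∫₀^∞ f = 0`, the sum `u ∑ₙ f((n+1)u)` is the error of the right-endpoint Riemann
sum of `f` with step `u`. On each cell `[nu, (n+1)u]` this error is at most `u` times the
variation of `f` on the cell, so summing over the cells gives `|∑ₙ f((n+1)u)| ≤ Var(f)` for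
every `u > 0`, hence the `O(u^{1/2})` bound. For `u ≥ 1` every sample point `(n+1)u` lies
in the range of the decay bound `|f x| ≤ C x^{-(N+2)}`, and summing it over `n` gives rapid
decay.
-/

open MeasureTheory Set Filter Topology

variable {E : Type*} [NormedAddCommGroup E]

theorem summable_one_div_succ_pow {k : ℕ} (hk : 1 < k) :
    Summable fun n : ℕ => 1 / ((n : ℝ) + 1) ^ k := by
  simpa using (summable_nat_add_iff 1).2 (Real.summable_one_div_nat_pow.2 hk)

theorem norm_comp_succ_mul_le_of_decay {f : ℝ → E} {C u : ℝ} {k : ℕ}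
    (hC : ∀ x, 1 ≤ x → ‖f x‖ ≤ C / x ^ k) {n : ℕ} (hn : 1 ≤ (n + 1) * u) :
    ‖f ((n + 1) * u)‖ ≤ C / u ^ k * (1 / ((n : ℝ) + 1) ^ k) := by
  rw [div_mul_div_comm, mul_one, mul_comm (u ^ k), ← mul_pow]
  exact hC _ hn

theorem summable_comp_succ_mul_of_decay [CompleteSpace E] {f : ℝ → E} {C u : ℝ}
    (hC : ∀ x, 1 ≤ x → ‖f x‖ ≤ C / x ^ 2) (hu : 0 < u) :
    Summable fun n : ℕ => f ((n + 1) * u) := by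
  refine .of_norm_bounded_eventually_nat
    ((summable_one_div_succ_pow one_lt_two).mul_left (C / u ^ 2)) ?_
  filter_upwards [eventually_ge_atTop ⌈u⁻¹⌉₊] with n hn
  refine norm_comp_succ_mul_le_of_decay hC ?_
  have hn' : u⁻¹ ≤ n := (Nat.le_ceil _).trans (Nat.cast_le.2 hn)
  calc 1 = u⁻¹ * u := (inv_mul_cancel₀ hu.ne').symm
    _ ≤ (n + 1) * u := by gcongr; linarith

theorem norm_tsum_comp_succ_mul_le_of_decay {f : ℝ → E} {C u : ℝ} {k : ℕ}
    (hC : ∀ x, 1 ≤ x → ‖f x‖ ≤ C / x ^ k) (hk : 1 < k) (hu : 1 ≤ u) :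
    ‖∑' n : ℕ, f ((n + 1) * u)‖ ≤ C / u ^ k * ∑' n : ℕ, 1 / ((n : ℝ) + 1) ^ k :=
  tsum_of_norm_bounded ((summable_one_div_succ_pow hk).hasSum.mul_left _) fun n =>
    norm_comp_succ_mul_le_of_decay hC (one_le_mul_of_one_le_of_one_le (by simp) hu)

theorem LocallyBoundedVariationOn.aemeasurable_restrict {f : ℝ → ℝ} {s : Set ℝ}
    {μ : Measure ℝ} (hf : LocallyBoundedVariationOn f s) (hs : MeasurableSet s) :
    AEMeasurable f (μ.restrict s) := by
  obtain ⟨p, q, hp, hq, rfl⟩ := hf.exists_monotoneOn_sub_monotoneOn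
  exact (aemeasurable_restrict_of_monotoneOn hs hp).sub
    (aemeasurable_restrict_of_monotoneOn hs hq)

theorem BoundedVariationOn.integrableOn_Ioi_of_decay {f : ℝ → ℝ} {C : ℝ}
    (hf : BoundedVariationOn f (Ici 0)) (hC : ∀ x, 1 ≤ x → |f x| ≤ C / x ^ 2) :
    IntegrableOn f (Ioi 0) := by
  have hmeas : AEStronglyMeasurable f (volume.restrict (Ioi 0)) :=
    ((hf.locallyBoundedVariationOn.aemeasurable_restrict measurableSet_Ici).mono_measure
      (Measure.restrict_mono Ioi_subset_Ici_self le_rfl)).aestronglyMeasurable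
  have hnear : IntegrableOn f (Ioc 0 1) := by
    refine Integrable.mono'
      (integrableOn_const (C := |f 1| + (eVariationOn f (Ici 0)).toReal) measure_Ioc_lt_top.ne)
      (hmeas.mono_set Ioc_subset_Ioi_self) ?_
    filter_upwards [ae_restrict_mem measurableSet_Ioc] with x hx
    have hdist := hf.dist_le (x := x) (y := 1) hx.1.le (zero_le_one' ℝ)
    rw [Real.dist_eq] at hdist
    rw [Real.norm_eq_abs]
    linarith [abs_sub_abs_le_abs_sub (f x) (f 1)]
  have hfar : IntegrableOn f (Ioi 1) := by
    refine Integrable.mono' ((integrableOn_Ioi_rpow_of_lt (by norm_num : (-2 : ℝ) < -1)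
      one_pos).const_mul C) (hmeas.mono_set (Ioi_subset_Ioi zero_le_one)) ?_
    filter_upwards [ae_restrict_mem measurableSet_Ioi] with x hx
    rw [Real.rpow_neg (by linarith [mem_Ioi.1 hx]), Real.rpow_two, ← div_eq_mul_inv]
    exact hC x hx.le
  simpa using hnear.union hfar

variable [NormedSpace ℝ E] [CompleteSpace E]

theorem norm_smul_sub_intervalIntegral_le_eVariationOn {f : ℝ → E} {a b c : ℝ} (hab : a ≤ b)
    (hc : c ∈ Icc a b) (hf : BoundedVariationOn f (Icc a b))
    (hfi : IntervalIntegrable f volume a b) :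
    ‖(b - a) • f c - ∫ x in a..b, f x‖ ≤ (b - a) * (eVariationOn f (Icc a b)).toReal := by
  rw [← intervalIntegral.integral_const,
    ← intervalIntegral.integral_sub intervalIntegrable_const hfi, mul_comm,
    ← abs_of_nonneg (sub_nonneg.2 hab)]
  refine intervalIntegral.norm_integral_le_of_norm_le_const fun x hx => ?_
  rw [← dist_eq_norm]
  exact hf.dist_le hc (Ioc_subset_Icc_self (uIoc_of_le hab ▸ hx))

theorem norm_smul_sum_sub_intervalIntegral_le_eVariationOn {f : ℝ → E} {a h : ℝ}
    (hh : 0 ≤ h) (K : ℕ) (hf : BoundedVariationOn f (Icc a (a + K * h)))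
    (hfi : IntervalIntegrable f volume a (a + K * h)) :
    ‖h • ∑ n ∈ Finset.range K, f (a + (n + 1) * h) - ∫ x in a..a + K * h, f x‖ ≤
      h * (eVariationOn f (Icc a (a + K * h))).toReal := by
  induction K with
  | zero => simp
  | succ K ih =>
    set b := a + K * h
    set c := a + (K + 1 : ℕ) * h
    have hab : a ≤ b := le_add_of_nonneg_right (by positivity)
    have hbc : b ≤ c := by simp only [b, c]; push_cast; linarith
    have hcb : c - b = h := by simp only [b, c]; push_cast; ring
    have hfab : BoundedVariationOn f (Icc a b) := hf.mono (Icc_subset_Icc_right hbc)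
    have hfbc : BoundedVariationOn f (Icc b c) := hf.mono (Icc_subset_Icc_left hab)
    have hfiab : IntervalIntegrable f volume a b :=
      hfi.mono_set (uIcc_subset_uIcc_left (mem_uIcc_of_le hab hbc))
    have hfibc : IntervalIntegrable f volume b c :=
      hfi.mono_set (uIcc_subset_uIcc_right (mem_uIcc_of_le hab hbc))
    have hsplit :
        eVariationOn f (Icc a b) + eVariationOn f (Icc b c) = eVariationOn f (Icc a c) := by
      simpa using eVariationOn.Icc_add_Icc f (s := univ) hab hbc (mem_univ b)
    calc ‖h • ∑ n ∈ Finset.range (K + 1), f (a + (n + 1) * h) - ∫ x in a..c, f x‖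
        = ‖(h • ∑ n ∈ Finset.range K, f (a + (n + 1) * h) - ∫ x in a..b, f x) +
            ((c - b) • f c - ∫ x in b..c, f x)‖ := by
          rw [Finset.sum_range_succ, smul_add, hcb,
            ← intervalIntegral.integral_add_adjacent_intervals hfiab hfibc]
          congr 1
          simp only [c]
          push_cast
          abel
      _ ≤ h * (eVariationOn f (Icc a b)).toReal + (c - b) * (eVariationOn f (Icc b c)).toReal :=
          norm_add_le_of_le (ih hfab hfiab)
            (norm_smul_sub_intervalIntegral_le_eVariationOn hbc ⟨hbc, le_rfl⟩ hfbc hfibc)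
      _ = h * (eVariationOn f (Icc a c)).toReal := by
          rw [← hsplit, ENNReal.toReal_add hfab hfbc, hcb, mul_add]

theorem norm_tsum_comp_succ_mul_le_eVariationOn {f : ℝ → E} (hf : BoundedVariationOn f (Ici 0))
    (hfi : IntegrableOn f (Ioi 0)) (hint : ∫ x in Ioi 0, f x = 0) {u : ℝ} (hu : 0 < u)
    (hsum : Summable fun n : ℕ => f ((n + 1) * u)) :
    ‖∑' n : ℕ, f ((n + 1) * u)‖ ≤ (eVariationOn f (Ici 0)).toReal := by
  have hpartial (K : ℕ) :
      ‖u • ∑ n ∈ Finset.range K, f ((n + 1) * u) - ∫ x in 0..K * u, f x‖ ≤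
        u * (eVariationOn f (Ici 0)).toReal := by
    have hsub : Icc 0 (K * u) ⊆ Ici 0 := Icc_subset_Ici_self
    have hfiK : IntervalIntegrable f volume 0 (K * u) :=
      (intervalIntegrable_iff_integrableOn_Ioc_of_le (by positivity)).2
        (hfi.mono_set Ioc_subset_Ioi_self)
    have hRiemann := norm_smul_sum_sub_intervalIntegral_le_eVariationOn (a := 0) hu.le K
      (by simpa using hf.mono hsub) (by simpa using hfiK)
    simp only [zero_add] at hRiemann
    exact hRiemann.trans
      (mul_le_mul_of_nonneg_left (ENNReal.toReal_mono hf (eVariationOn.mono f hsub)) hu.le)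
  have hlim : Tendsto
      (fun K : ℕ => u • ∑ n ∈ Finset.range K, f ((n + 1) * u) - ∫ x in 0..K * u, f x)
      atTop (𝓝 (u • ∑' n : ℕ, f ((n + 1) * u) - 0)) := by
    refine (hsum.hasSum.tendsto_sum_nat.const_smul u).sub ?_
    rw [← hint]
    exact intervalIntegral_tendsto_integral_Ioi 0 hfi
      (tendsto_natCast_atTop_atTop.atTop_mul_const hu)
  have hbound := le_of_tendsto' hlim.norm hpartial
  rw [sub_zero, norm_smul, Real.norm_of_nonneg hu.le] at hbound
  exact le_of_mul_le_mul_left hbound hu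

theorem stmt1_general (f : ℝ → ℝ)
    (hBV : eVariationOn f (Set.Ici 0) ≠ ⊤)
    (hdecay : ∀ N : ℕ, ∃ C : ℝ, ∀ u : ℝ, 1 ≤ u → |f u| ≤ C / u ^ N)
    (hint : ∫ t in Set.Ioi (0:ℝ), f t = 0) :
    (∀ u : ℝ, 0 < u → Summable (fun n : ℕ => f (((n : ℝ) + 1) * u))) ∧
    (∃ C : ℝ, ∀ u ∈ Set.Ioc (0:ℝ) 1,
      |Real.sqrt u * ∑' n : ℕ, f (((n : ℝ) + 1) * u)| ≤ C * Real.sqrt u) ∧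
    (∀ N : ℕ, ∃ C : ℝ, ∀ u : ℝ, 1 ≤ u →
      |Real.sqrt u * ∑' n : ℕ, f (((n : ℝ) + 1) * u)| ≤ C / u ^ N) := by
  obtain ⟨C, hC⟩ := hdecay 2
  have hsum (u : ℝ) (hu : 0 < u) : Summable fun n : ℕ => f ((n + 1) * u) :=
    summable_comp_succ_mul_of_decay hC hu
  have hfi := BoundedVariationOn.integrableOn_Ioi_of_decay hBV hC
  refine ⟨hsum, ⟨(eVariationOn f (Ici 0)).toReal, fun u hu => ?_⟩, fun N => ?_⟩
  · rw [abs_mul, abs_of_nonneg (Real.sqrt_nonneg u), mul_comm]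
    exact mul_le_mul_of_nonneg_right
      (norm_tsum_comp_succ_mul_le_eVariationOn hBV hfi hint hu.1 (hsum u hu.1)) (Real.sqrt_nonneg u)
  · obtain ⟨C, hC⟩ := hdecay (N + 2)
    set Z := ∑' n : ℕ, 1 / ((n : ℝ) + 1) ^ (N + 2)
    refine ⟨C * Z, fun u hu => ?_⟩
    have hsqrt : √u ≤ u ^ 2 :=
      ((Real.sqrt_le_left (by linarith)).2 (le_self_pow₀ hu two_ne_zero)).trans
        (le_self_pow₀ hu two_ne_zero)
    calc |√u * ∑' n : ℕ, f ((n + 1) * u)| = √u * ‖∑' n : ℕ, f ((n + 1) * u)‖ := by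
          rw [abs_mul, abs_of_nonneg (Real.sqrt_nonneg u), Real.norm_eq_abs]
      _ ≤ u ^ 2 * (C / u ^ (N + 2) * Z) :=
          mul_le_mul hsqrt (norm_tsum_comp_succ_mul_le_of_decay hC (by omega) hu)
            (norm_nonneg _) (by positivity)
      _ = C * Z / u ^ N := by
          rw [pow_add]
          field_simp

/-- `E(f)(u) = u^{1/2} ∑_{n≥1} f(nu)` is well-defined pointwise, is
`O(u^{1/2})` as `u → 0`, and of rapid decay as `u → ∞`. -/
theorem stmt1 (f : ℝ → ℝ)
    (h0 : f 0 = 0)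
    (hneg : ∀ x < (0:ℝ), f x = 0)
    (hBV : eVariationOn f (Set.Ici 0) ≠ ⊤)
    (hdecay : ∀ N : ℕ, ∃ C : ℝ, ∀ u : ℝ, 1 ≤ u → |f u| ≤ C / u ^ N)
    (hO2 : ∃ C : ℝ, ∀ u ∈ Set.Ioc (0:ℝ) 1, |f u| ≤ C * u ^ 2)
    (hint : ∫ t in Set.Ioi (0:ℝ), f t = 0) :
    (∀ u : ℝ, 0 < u → Summable (fun n : ℕ => f (((n : ℝ) + 1) * u))) ∧
    (∃ C : ℝ, ∀ u ∈ Set.Ioc (0:ℝ) 1,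
      |Real.sqrt u * ∑' n : ℕ, f (((n : ℝ) + 1) * u)| ≤ C * Real.sqrt u) ∧
    (∀ N : ℕ, ∃ C : ℝ, ∀ u : ℝ, 1 ≤ u →
      |Real.sqrt u * ∑' n : ℕ, f (((n : ℝ) + 1) * u)| ≤ C / u ^ N) :=
  stmt1_general f hBV hdecay hint
end

section
/- Let f be as above (bounded variation, rapid decay at ∞, O(u²) at 0, vanishing integral) and μ > 1. Then the series Σ_μ E(f)(u) := ∑_{k∈ℤ} E(f)(μ^k u) converges geometrically, uniformly on compact subsets of (0,∞), and defines a bounded measurable function on ℝ₊*/μ^ℤ. -/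
/-! The heart of the matter is that `∑_{n≥1} f(nu)` is bounded, uniformly in `u > 0`, by the
total variation `V` of `f`: `u ∑_{n≤N} f(nu) - ∫_0^{Nu} f` is the error of a right Riemann sum,
at most `u` times the variation of `f` on `[0, Nu]`, and the integral tends to `∫_0^∞ f = 0`.
Hence `|E(f)(v)| ≤ V √v`, while the decay of `f` gives `|E(f)(v)| = O(v^{-1/2})` as `v → ∞`.
Therefore `|E(f)(μ^k u)| = O(μ^{-|k|/2})` uniformly for `u` in a compact subset of `(0,∞)`.
The orbit sum is `μ`-invariant by reindexing, bounded because every orbit meets `[1, μ]`, and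
measurable as a pointwise limit of measurable partial sums. -/

open MeasureTheory Set

/-- The map `E(f)(u) = u^{1/2} ∑_{n≥1} f(nu)`. -/
noncomputable def Emap (f : ℝ → ℝ) (u : ℝ) : ℝ :=
  Real.sqrt u * ∑' n : ℕ, f (((n : ℝ) + 1) * u)

/-- The periodization `Σ_μ g (u) = ∑_{k∈ℤ} g(μ^k u)`. -/
noncomputable def SigmaMu (μ : ℝ) (g : ℝ → ℝ) (u : ℝ) : ℝ :=
  ∑' k : ℤ, g (μ ^ k * u)

open Filter Topology

lemma measurable_tsum_of_summable {α ι : Type*} [MeasurableSpace α] [Countable ι]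
    {g : ι → α → ℝ} (hg : ∀ i, Measurable (g i)) (hs : ∀ x, Summable fun i => g i x) :
    Measurable fun x => ∑' i, g i x :=
  measurable_of_tendsto_metrizable' atTop (fun s => Finset.measurable_sum s fun i _ => hg i)
    (tendsto_pi_nhds.2 fun x => (hs x).hasSum)

lemma summable_pow_natAbs {r : ℝ} (h0 : 0 ≤ r) (h1 : r < 1) :
    Summable fun k : ℤ => r ^ k.natAbs :=
  .of_nat_of_neg (by simpa using summable_geometric_of_lt_one h0 h1)
    (by simpa using summable_geometric_of_lt_one h0 h1)

lemma Real.sqrt_zpow {x : ℝ} (hx : 0 ≤ x) (k : ℤ) : √(x ^ k) = √x ^ k := by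
  rw [← Real.sqrt_sq (zpow_nonneg (Real.sqrt_nonneg x) k), ← zpow_natCast, ← zpow_mul, mul_comm,
    zpow_mul, zpow_natCast, Real.sq_sqrt hx]

lemma BoundedVariationOn.measurable {f : ℝ → ℝ} (hf : BoundedVariationOn f univ) :
    Measurable f := by
  obtain ⟨p, q, hp, hq, rfl⟩ := hf.locallyBoundedVariationOn.exists_monotoneOn_sub_monotoneOn
  exact (monotoneOn_univ.1 hp).measurable.sub (monotoneOn_univ.1 hq).measurable

lemma boundedVariationOn_univ_of_Ici {f : ℝ → ℝ} (hf : ∀ x ≤ 0, f x = 0)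
    (hBV : BoundedVariationOn f (Ici 0)) : BoundedVariationOn f univ := by
  have hIic : eVariationOn f (Iic 0) = 0 :=
    eVariationOn.constant_on ((subsingleton_singleton (a := (0 : ℝ))).anti
      (image_subset_iff.2 fun x hx => hf x hx))
  rw [BoundedVariationOn, ← Iic_union_Ici (a := (0 : ℝ)),
    eVariationOn.union f isGreatest_Iic isLeast_Ici, hIic, zero_add]
  exact hBV

lemma abs_mul_sub_intervalIntegral_le {f : ℝ → ℝ} {a b : ℝ} (hab : a ≤ b)
    (hf : BoundedVariationOn f (Icc a b)) (hfi : IntervalIntegrable f volume a b) :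
    |(b - a) * f b - ∫ x in a..b, f x| ≤ (b - a) * (eVariationOn f (Icc a b)).toReal := by
  have hdiff : (b - a) * f b - ∫ x in a..b, f x = ∫ x in a..b, (f b - f x) := by
    rw [intervalIntegral.integral_sub intervalIntegrable_const hfi,
      intervalIntegral.integral_const, smul_eq_mul]
  rw [hdiff, ← Real.norm_eq_abs, mul_comm, ← abs_of_nonneg (sub_nonneg.2 hab)]
  refine intervalIntegral.norm_integral_le_of_norm_le_const fun x hx => ?_
  rw [uIoc_of_le hab] at hx
  exact hf.dist_le (right_mem_Icc.2 hab) (Ioc_subset_Icc_self hx)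

lemma abs_riemannSum_sub_intervalIntegral_le {f : ℝ → ℝ} {u : ℝ} (hu : 0 ≤ u) (N : ℕ)
    (hf : BoundedVariationOn f (Icc 0 (N * u))) (hfi : IntervalIntegrable f volume 0 (N * u)) :
    |u * ∑ n ∈ Finset.range N, f ((n + 1) * u) - ∫ x in 0..N * u, f x|
      ≤ u * (eVariationOn f (Icc 0 (N * u))).toReal := by
  set x : ℕ → ℝ := fun n => n * u
  have hx : Monotone x := fun m n hmn => by dsimp [x]; gcongr
  have hstep : ∀ n, x (n + 1) - x n = u := fun n => by simp only [x]; push_cast; ring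
  have hsub : ∀ n ∈ Finset.range N, Icc (x n) (x (n + 1)) ⊆ Icc 0 (N * u) := fun n hn =>
    Icc_subset_Icc (by positivity) (by dsimp [x]; gcongr; exact_mod_cast Finset.mem_range.1 hn)
  have hV : ∀ n ∈ Finset.range N, BoundedVariationOn f (Icc (x n) (x (n + 1))) :=
    fun n hn => ne_top_of_le_ne_top hf (eVariationOn.mono f (hsub n hn))
  have hI : ∀ n ∈ Finset.range N, IntervalIntegrable f volume (x n) (x (n + 1)) := fun n hn =>
    hfi.mono_set (by rw [uIcc_of_le (hx n.le_succ), uIcc_of_le (by positivity)]; exact hsub n hn)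
  calc |u * ∑ n ∈ Finset.range N, f ((n + 1) * u) - ∫ x in 0..N * u, f x|
      = |∑ n ∈ Finset.range N,
          ((x (n + 1) - x n) * f (x (n + 1)) - ∫ t in x n..x (n + 1), f t)| := by
        rw [Finset.sum_sub_distrib, intervalIntegral.sum_integral_adjacent_intervals
          fun n hn => hI n (Finset.mem_range.2 hn), Finset.mul_sum]
        simp only [hstep, x]
        push_cast
        simp
    _ ≤ ∑ n ∈ Finset.range N,
          (x (n + 1) - x n) * (eVariationOn f (Icc (x n) (x (n + 1)))).toReal :=
        (Finset.abs_sum_le_sum_abs _ _).trans <| Finset.sum_le_sum fun n hn =>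
          abs_mul_sub_intervalIntegral_le (hx n.le_succ) (hV n hn) (hI n hn)
    _ = u * (eVariationOn f (Icc 0 (N * u))).toReal := by
        simp only [hstep, ← Finset.mul_sum]
        rw [← ENNReal.toReal_sum hV, eVariationOn.sum' f hx]
        simp [x]

lemma abs_tsum_comp_succ_mul_le {f : ℝ → ℝ} (hf : BoundedVariationOn f (Ici 0))
    (hfi : IntegrableOn f (Ioi 0)) (hint : ∫ t in Ioi 0, f t = 0) {u : ℝ} (hu : 0 < u)
    (hs : Summable fun n : ℕ => f ((n + 1) * u)) :
    |∑' n : ℕ, f ((n + 1) * u)| ≤ (eVariationOn f (Ici 0)).toReal := by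
  have hlim : Tendsto (fun N : ℕ => u * ∑ n ∈ Finset.range N, f ((n + 1) * u)
      - ∫ x in 0..N * u, f x) atTop (𝓝 (u * ∑' n : ℕ, f ((n + 1) * u))) := by
    have := (hs.hasSum.tendsto_sum_nat.const_mul u).sub (intervalIntegral_tendsto_integral_Ioi 0
      hfi (tendsto_natCast_atTop_atTop.atTop_mul_const hu))
    rwa [hint, sub_zero] at this
  have hbound : ∀ N : ℕ, |u * ∑ n ∈ Finset.range N, f ((n + 1) * u) - ∫ x in 0..N * u, f x|
      ≤ u * (eVariationOn f (Ici 0)).toReal := fun N => by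
    have hsub : Icc 0 ((N : ℝ) * u) ⊆ Ici 0 := Icc_subset_Ici_self
    refine (abs_riemannSum_sub_intervalIntegral_le hu.le N
      (ne_top_of_le_ne_top hf (eVariationOn.mono f hsub)) ?_).trans ?_
    · rw [intervalIntegrable_iff_integrableOn_Ioc_of_le (by positivity)]
      exact hfi.mono_set Ioc_subset_Ioi_self
    · gcongr
      exact eVariationOn.mono f hsub
  have := le_of_tendsto' hlim.abs hbound
  rwa [abs_mul, abs_of_pos hu, mul_le_mul_iff_right₀ hu] at this

lemma integrableOn_Ioi_zero_of_abs_le {f : ℝ → ℝ} {B C : ℝ} (hfm : AEStronglyMeasurable f)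
    (hB : ∀ x, |f x| ≤ B) (hC : ∀ x, 1 ≤ x → |f x| ≤ C / x ^ 2) :
    IntegrableOn f (Ioi 0) := by
  refine (integrable_inv_one_add_sq.const_mul (2 * max B C)).integrableOn.mono'
    hfm.restrict ((ae_restrict_iff' measurableSet_Ioi).2 (.of_forall fun x hx => ?_))
  have hx2 : 0 < 1 + x ^ 2 := by positivity
  rw [Real.norm_eq_abs, ← div_eq_mul_inv, le_div_iff₀ hx2]
  rcases lt_or_ge x 1 with hx1 | hx1
  · have : 1 + x ^ 2 ≤ 2 := by nlinarith [mem_Ioi.1 hx]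
    nlinarith [hB x, le_max_left B C, abs_nonneg (f x)]
  · have hx0 : 0 < x ^ 2 := by positivity
    have h := (le_div_iff₀ hx0).1 (hC x hx1)
    have : |f x| * (1 + x ^ 2) ≤ |f x| * (2 * x ^ 2) :=
      mul_le_mul_of_nonneg_left (by nlinarith) (abs_nonneg _)
    nlinarith [le_max_right B C]

lemma summable_one_div_nat_add_one_sq : Summable fun n : ℕ => 1 / ((n : ℝ) + 1) ^ 2 := by
  exact_mod_cast (summable_nat_add_iff 1).2 (Real.summable_one_div_nat_pow.2 one_lt_two)

lemma abs_comp_succ_mul_le {f : ℝ → ℝ} {C : ℝ} (hC : ∀ x, 1 ≤ x → |f x| ≤ C / x ^ 2)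
    {v : ℝ} {n : ℕ} (hn : 1 ≤ (n + 1) * v) :
    |f ((n + 1) * v)| ≤ C / v ^ 2 * (1 / ((n : ℝ) + 1) ^ 2) :=
  (hC _ hn).trans_eq (by rw [mul_pow, div_mul_div_comm, mul_one, mul_comm (v ^ 2)])

lemma summable_comp_succ_mul {f : ℝ → ℝ} {C : ℝ} (hf : ∀ x ≤ 0, f x = 0)
    (hC : ∀ x, 1 ≤ x → |f x| ≤ C / x ^ 2) (u : ℝ) :
    Summable fun n : ℕ => f ((n + 1) * u) := by
  rcases le_or_gt u 0 with hu | hu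
  · have hzero : ∀ n : ℕ, f ((n + 1) * u) = 0 := fun n =>
      hf _ (mul_nonpos_of_nonneg_of_nonpos (by positivity) hu)
    simp only [hzero, summable_zero]
  refine .of_norm_bounded_eventually_nat (summable_one_div_nat_add_one_sq.mul_left (C / u ^ 2)) ?_
  filter_upwards [eventually_ge_atTop ⌈u⁻¹⌉₊] with n hn
  have : u⁻¹ ≤ n := (Nat.le_ceil _).trans (by exact_mod_cast hn)
  exact abs_comp_succ_mul_le hC ((div_le_iff₀ hu).1 (by rw [one_div]; linarith))

lemma exists_abs_tsum_comp_succ_mul_le {f : ℝ → ℝ} {C : ℝ}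
    (hC : ∀ x, 1 ≤ x → |f x| ≤ C / x ^ 2) :
    ∃ B, ∀ v, 1 ≤ v → |∑' n : ℕ, f ((n + 1) * v)| ≤ B / v := by
  have hC0 : 0 ≤ C := by simpa using (abs_nonneg _).trans (hC 1 le_rfl)
  obtain ⟨K, hK⟩ := summable_one_div_nat_add_one_sq
  refine ⟨C * K, fun v hv => ?_⟩
  have hK0 : 0 ≤ K := hK.nonneg fun n => by positivity
  have hv0 : 0 < v := one_pos.trans_le hv
  calc |∑' n : ℕ, f ((n + 1) * v)| ≤ C / v ^ 2 * K := by
        rw [← Real.norm_eq_abs]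
        exact tsum_of_norm_bounded (hK.mul_left _) fun n => abs_comp_succ_mul_le hC (by
          nlinarith [(n.cast_nonneg : (0 : ℝ) ≤ n)])
    _ ≤ C * K / v := by
        rw [div_mul_eq_mul_div]
        gcongr
        nlinarith

lemma abs_Emap_le_mul_min {f : ℝ → ℝ} {V B : ℝ}
    (hV : ∀ v, 0 < v → |∑' n : ℕ, f ((n + 1) * v)| ≤ V)
    (hB : ∀ v, 1 ≤ v → |∑' n : ℕ, f ((n + 1) * v)| ≤ B / v) {v : ℝ} (hv : 0 < v) :
    |Emap f v| ≤ max V B * min (√v) (√v)⁻¹ := by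
  rw [Emap, abs_mul, abs_of_nonneg (Real.sqrt_nonneg v)]
  rcases le_total v 1 with hv1 | hv1
  · have hs : √v ≤ 1 := Real.sqrt_le_one.2 hv1
    rw [min_eq_left (hs.trans ((one_le_inv₀ (Real.sqrt_pos.2 hv)).2 hs)), mul_comm]
    gcongr
    exact (hV v hv).trans (le_max_left _ _)
  · have hs : 1 ≤ √v := Real.one_le_sqrt.2 hv1
    rw [min_eq_right ((inv_le_one_of_one_le₀ hs).trans hs)]
    calc √v * |∑' n : ℕ, f ((n + 1) * v)| ≤ √v * (B / v) := by gcongr; exact hB v hv1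
      _ = B * (√v)⁻¹ := by
        rw [mul_div_assoc', mul_comm, mul_div_assoc, Real.sqrt_div_self', one_div]
      _ ≤ max V B * (√v)⁻¹ := by gcongr; exact le_max_right _ _

lemma min_sqrt_zpow_mul_le {μ a b u : ℝ} (hμ : 1 < μ) (ha : 0 < a) (hu : u ∈ Icc a b) (k : ℤ) :
    min √(μ ^ k * u) (√(μ ^ k * u))⁻¹ ≤ max (√a)⁻¹ √b * (√μ)⁻¹ ^ k.natAbs := by
  have hs : 0 < √μ := Real.sqrt_pos.2 (one_pos.trans hμ)
  have hsa : 0 < √a := Real.sqrt_pos.2 ha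
  rw [Real.sqrt_mul (zpow_nonneg (one_pos.trans hμ).le k), Real.sqrt_zpow (one_pos.trans hμ).le]
  obtain ⟨n, rfl | rfl⟩ := Int.eq_nat_or_neg k
  · refine (min_le_right _ _).trans ?_
    rw [Int.natAbs_natCast, zpow_natCast, mul_inv, ← inv_pow, mul_comm]
    exact mul_le_mul_of_nonneg_right ((inv_anti₀ hsa (Real.sqrt_le_sqrt hu.1)).trans
      (le_max_left _ _)) (by positivity)
  · refine (min_le_left _ _).trans ?_
    rw [Int.natAbs_neg, Int.natAbs_natCast, zpow_neg, zpow_natCast, ← inv_pow, mul_comm]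
    exact mul_le_mul_of_nonneg_right ((Real.sqrt_le_sqrt hu.2).trans (le_max_right _ _))
      (by positivity)

lemma abs_Emap_zpow_mul_le {f : ℝ → ℝ} {V B μ a b u : ℝ}
    (hV : ∀ v, 0 < v → |∑' n : ℕ, f ((n + 1) * v)| ≤ V)
    (hB : ∀ v, 1 ≤ v → |∑' n : ℕ, f ((n + 1) * v)| ≤ B / v)
    (hμ : 1 < μ) (ha : 0 < a) (hu : u ∈ Icc a b) (k : ℤ) :
    |Emap f (μ ^ k * u)| ≤ max V B * max (√a)⁻¹ √b * (√μ)⁻¹ ^ k.natAbs := by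
  have hv : 0 < μ ^ k * u := mul_pos (zpow_pos (one_pos.trans hμ) k) (ha.trans_le hu.1)
  refine (abs_Emap_le_mul_min hV hB hv).trans ?_
  rw [mul_assoc]
  gcongr
  · exact (abs_nonneg _).trans (hV 1 one_pos) |>.trans (le_max_left _ _)
  · exact min_sqrt_zpow_mul_le hμ ha hu k

lemma Emap_of_nonpos (f : ℝ → ℝ) {v : ℝ} (hv : v ≤ 0) : Emap f v = 0 := by
  rw [Emap, Real.sqrt_eq_zero'.2 hv, zero_mul]

lemma measurable_Emap {f : ℝ → ℝ} (hf : Measurable f)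
    (hs : ∀ u, Summable fun n : ℕ => f ((n + 1) * u)) : Measurable (Emap f) :=
  Real.continuous_sqrt.measurable.mul
    (measurable_tsum_of_summable (fun _ => hf.comp (measurable_const_mul _)) hs)

lemma SigmaMu_zpow_mul {μ : ℝ} (hμ : μ ≠ 0) (g : ℝ → ℝ) (m : ℤ) (u : ℝ) :
    SigmaMu μ g (μ ^ m * u) = SigmaMu μ g u := by
  simp only [SigmaMu, ← mul_assoc, ← zpow_add₀ hμ]
  exact (Equiv.addRight m).tsum_eq fun k => g (μ ^ k * u)

lemma abs_SigmaMu_le {μ M : ℝ} {g : ℝ → ℝ} {c : ℤ → ℝ} (hμ : 1 < μ)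
    (hg : ∀ u ∈ Icc 1 μ, ∀ k, |g (μ ^ k * u)| ≤ c k) (hc : HasSum c M) {u : ℝ} (hu : 0 < u) :
    |SigmaMu μ g u| ≤ M := by
  obtain ⟨m, hm_le, hlt_m⟩ := exists_mem_Ico_zpow hu hμ
  have hμm : 0 < μ ^ m := zpow_pos (one_pos.trans hμ) m
  have hu₀ : u / μ ^ m ∈ Icc 1 μ := by
    constructor
    · rwa [one_le_div hμm]
    · rw [div_le_iff₀ hμm, ← zpow_one_add₀ (one_pos.trans hμ).ne', add_comm]
      exact hlt_m.le
  rw [← mul_div_cancel₀ u hμm.ne', SigmaMu_zpow_mul (one_pos.trans hμ).ne', ← Real.norm_eq_abs]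
  exact tsum_of_norm_bounded hc (hg _ hu₀)

lemma measurable_SigmaMu {μ : ℝ} {g : ℝ → ℝ} (hg : Measurable g)
    (hs : ∀ u, Summable fun k : ℤ => g (μ ^ k * u)) : Measurable (SigmaMu μ g) :=
  measurable_tsum_of_summable (fun _ => hg.comp (measurable_const_mul _)) hs

theorem stmt2_general (f : ℝ → ℝ)
    (h0 : f 0 = 0)
    (hneg : ∀ x < (0:ℝ), f x = 0)
    (hBV : eVariationOn f (Set.Ici 0) ≠ ⊤)
    (hdecay : ∀ N : ℕ, ∃ C : ℝ, ∀ u : ℝ, 1 ≤ u → |f u| ≤ C / u ^ N)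
    (hint : ∫ t in Set.Ioi (0:ℝ), f t = 0)
    (μ : ℝ) (hμ : 1 < μ) :
    (∀ u : ℝ, 0 < u → Summable (fun k : ℤ => Emap f (μ ^ k * u))) ∧
    (∀ a b : ℝ, 0 < a → ∃ C : ℝ, ∃ r : ℝ, 0 < r ∧ r < 1 ∧
      ∀ u ∈ Set.Icc a b, ∀ k : ℤ, |Emap f (μ ^ k * u)| ≤ C * r ^ k.natAbs) ∧
    (∃ M : ℝ, ∀ u : ℝ, 0 < u → |SigmaMu μ (Emap f) u| ≤ M) ∧
    (∀ u : ℝ, 0 < u → SigmaMu μ (Emap f) (μ * u) = SigmaMu μ (Emap f) u) ∧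
    Measurable (SigmaMu μ (Emap f)) := by
  have hf0 : ∀ x ≤ 0, f x = 0 := fun x hx => hx.lt_or_eq.elim (hneg x) (· ▸ h0)
  have hfu : BoundedVariationOn f univ := boundedVariationOn_univ_of_Ici hf0 hBV
  obtain ⟨C, hC⟩ := hdecay 2
  have hsum := summable_comp_succ_mul hf0 hC
  have hfi : IntegrableOn f (Ioi 0) :=
    integrableOn_Ioi_zero_of_abs_le hfu.measurable.aestronglyMeasurable
      (fun x => by simpa [h0] using hfu.dist_le (mem_univ x) (mem_univ 0)) hC
  obtain ⟨B, hB⟩ := exists_abs_tsum_comp_succ_mul_le hC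
  have hV : ∀ v, 0 < v → |∑' n : ℕ, f ((n + 1) * v)| ≤ (eVariationOn f (Ici 0)).toReal :=
    fun v hv => abs_tsum_comp_succ_mul_le hBV hfi hint hv (hsum v)
  have hgeom : ∀ {a b u : ℝ}, 0 < a → u ∈ Icc a b → ∀ k : ℤ, |Emap f (μ ^ k * u)|
      ≤ max (eVariationOn f (Ici 0)).toReal B * max (√a)⁻¹ √b * (√μ)⁻¹ ^ k.natAbs :=
    abs_Emap_zpow_mul_le hV hB hμ
  have hr0 : 0 < (√μ)⁻¹ := by positivity
  have hr1 : (√μ)⁻¹ < 1 := inv_lt_one_of_one_lt₀ (Real.lt_sqrt zero_le_one |>.2 (by simpa))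
  have hgeom_sum := summable_pow_natAbs hr0.le hr1
  have hsumZ : ∀ u, Summable fun k : ℤ => Emap f (μ ^ k * u) := fun u => by
    rcases le_or_gt u 0 with hu | hu
    · simp only [Emap_of_nonpos f (mul_nonpos_of_nonneg_of_nonpos
        (zpow_nonneg (one_pos.trans hμ).le _) hu), summable_zero]
    · exact .of_norm_bounded (hgeom_sum.mul_left _) (hgeom hu ⟨le_rfl, le_rfl⟩)
  refine ⟨fun u _ => hsumZ u, fun a b ha => ⟨_, _, hr0, hr1, fun u hu => hgeom ha hu⟩,
    ⟨_, fun u hu => abs_SigmaMu_le hμ (fun v hv => hgeom one_pos hv)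
      (hgeom_sum.mul_left _).hasSum hu⟩, fun u _ => ?_,
    measurable_SigmaMu (measurable_Emap hfu.measurable hsum) hsumZ⟩
  simpa using SigmaMu_zpow_mul (one_pos.trans hμ).ne' (Emap f) 1 u

/-- the series `Σ_μ E(f)(u) = ∑_{k∈ℤ} E(f)(μ^k u)` converges geometrically,
uniformly on compact subsets of `(0,∞)`, and defines a bounded measurable function on
`ℝ₊*/μ^ℤ` (i.e. a bounded measurable function on `(0,∞)` invariant under `u ↦ μu`). -/
theorem stmt2 (f : ℝ → ℝ)
    (h0 : f 0 = 0)
    (hneg : ∀ x < (0:ℝ), f x = 0)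
    (hBV : eVariationOn f (Set.Ici 0) ≠ ⊤)
    (hdecay : ∀ N : ℕ, ∃ C : ℝ, ∀ u : ℝ, 1 ≤ u → |f u| ≤ C / u ^ N)
    (hO2 : ∃ C : ℝ, ∀ u ∈ Set.Ioc (0:ℝ) 1, |f u| ≤ C * u ^ 2)
    (hint : ∫ t in Set.Ioi (0:ℝ), f t = 0)
    (μ : ℝ) (hμ : 1 < μ) :
    (∀ u : ℝ, 0 < u → Summable (fun k : ℤ => Emap f (μ ^ k * u))) ∧
    (∀ a b : ℝ, 0 < a → ∃ C : ℝ, ∃ r : ℝ, 0 < r ∧ r < 1 ∧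
      ∀ u ∈ Set.Icc a b, ∀ k : ℤ, |Emap f (μ ^ k * u)| ≤ C * r ^ k.natAbs) ∧
    (∃ M : ℝ, ∀ u : ℝ, 0 < u → |SigmaMu μ (Emap f) u| ≤ M) ∧
    (∀ u : ℝ, 0 < u → SigmaMu μ (Emap f) (μ * u) = SigmaMu μ (Emap f) u) ∧
    Measurable (SigmaMu μ (Emap f)) :=
  stmt2_general f h0 hneg hBV hdecay hint μ hμ
end

section
/- For f ∈ S₀^ev (even Schwartz, f(0)=0, ∫f=0), the Poisson summation formula implies E(f̂)(x) = E(f)(x^{-1}) for all x > 0, where f̂ is the Fourier transform of f and E(f)(u) = u^{1/2}∑_{n≥1}f(nu). -/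
/-!
With `g(t) = f(t / x)` one has `ĝ(ξ) = x f̂(x ξ)`, so the claim is Poisson summation
`∑_{n ∈ ℤ} g(n) = ∑_{n ∈ ℤ} ĝ(n)` up to the factor `√x = x √(x⁻¹)`. Both `g` and `ĝ` are even
and vanish at `0` (`ĝ(0) = ∫ g = 0`), so each side is twice its sum over `n ≥ 1`.
-/

open MeasureTheory Set

/-- The space `S₀^ev` of even real Schwartz functions with `f(0) = 0` and `∫ f = 0`. -/
def S0ev : Set (SchwartzMap ℝ ℝ) :=
  {f | (∀ x, f (-x) = f x) ∧ f 0 = 0 ∧ (∫ x : ℝ, f x) = 0}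

open FourierTransform SchwartzMap

lemma Real.fourier_comp_mul_right {E : Type*} [NormedAddCommGroup E] [NormedSpace ℂ E]
    (g : ℝ → E) {a : ℝ} (ha : a ≠ 0) (ξ : ℝ) :
    𝓕 (fun t ↦ g (t * a)) ξ = |a⁻¹| • 𝓕 g (ξ * a⁻¹) := by
  simp only [Real.fourier_real_eq]
  have hcomm (v : ℝ) : 𝐞 (-(v * ξ)) • g (v * a) = 𝐞 (-(v * a * (ξ * a⁻¹))) • g (v * a) := by
    field_simp
  simp_rw [hcomm]
  exact Measure.integral_comp_mul_right (fun s ↦ 𝐞 (-(s * (ξ * a⁻¹))) • g s) a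

lemma Function.Even.fourier {V E : Type*} [NormedAddCommGroup E] [NormedSpace ℂ E]
    [NormedAddCommGroup V] [InnerProductSpace ℝ V] [MeasurableSpace V] [BorelSpace V]
    [FiniteDimensional ℝ V] {g : V → E} (hg : g.Even) : (𝓕 g).Even := fun w ↦ by
  change 𝓕 g (LinearIsometryEquiv.neg ℝ w) = _
  rw [← Real.fourier_comp_linearIsometry, show g ∘ LinearIsometryEquiv.neg ℝ = g from funext hg]

lemma SchwartzMap.summable_int {E : Type*} [NormedAddCommGroup E] [NormedSpace ℝ E]
    [CompleteSpace E] (g : 𝓢(ℝ, E)) : Summable fun n : ℤ ↦ g n :=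
  summable_of_isBigO (Real.summable_abs_int_rpow one_lt_two)
    ((g.isBigO_cocompact_rpow (-2)).comp_tendsto Int.tendsto_coe_cofinite)

lemma Function.Even.tsum_int_cast_eq_two_mul_tsum_nat_succ {φ : ℝ → ℂ} (heven : φ.Even)
    (hsum : Summable fun n : ℤ ↦ φ n) (h0 : φ 0 = 0) :
    ∑' n : ℤ, φ n = 2 * ∑' n : ℕ, φ (n + 1) := by
  have heven_int : Function.Even fun n : ℤ ↦ φ n := fun n ↦ by simpa using heven n
  rw [tsum_int_eq_zero_add_two_mul_tsum_pnat heven_int hsum, Int.cast_zero, h0, zero_add,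
    nsmul_eq_mul, Nat.cast_ofNat]
  congr 1
  exact_mod_cast tsum_pnat_eq_tsum_succ (f := fun n : ℕ ↦ φ n)

theorem SchwartzMap.tsum_nat_succ_eq_tsum_fourier_of_even (g : 𝓢(ℝ, ℂ)) (heven : (⇑g).Even)
    (h0 : g 0 = 0) (hint : ∫ t, g t = 0) :
    ∑' n : ℕ, g (n + 1) = ∑' n : ℕ, 𝓕 (⇑g) (n + 1) := by
  have hpoisson := g.tsum_eq_tsum_fourier 0
  simp only [zero_add, QuotientAddGroup.mk_zero, fourier_eval_zero, mul_one, fourier_coe]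
    at hpoisson
  have hF0 : 𝓕 (⇑g) 0 = 0 := by simpa [Real.fourier_real_eq] using hint
  rw [heven.tsum_int_cast_eq_two_mul_tsum_nat_succ g.summable_int h0,
    heven.fourier.tsum_int_cast_eq_two_mul_tsum_nat_succ (by simpa using (𝓕 g).summable_int)
      hF0] at hpoisson
  exact mul_left_cancel₀ two_ne_zero hpoisson

theorem SchwartzMap.tsum_nat_succ_mul_inv_eq_mul_tsum_fourier_of_even (g : 𝓢(ℝ, ℂ))
    (heven : (⇑g).Even) (h0 : g 0 = 0) (hint : ∫ t, g t = 0) {a : ℝ} (ha : 0 < a) :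
    ∑' n : ℕ, g ((n + 1) * a⁻¹) = a * ∑' n : ℕ, 𝓕 (⇑g) ((n + 1) * a) := by
  let G := compCLMOfContinuousLinearEquiv ℝ
    (ContinuousLinearEquiv.unitsEquivAut ℝ (Units.mk0 a⁻¹ (inv_ne_zero ha.ne'))) g
  have hG : ⇑G = fun t ↦ g (t * a⁻¹) := by ext; simp [G]
  have hFG (ξ : ℝ) : 𝓕 (⇑G) ξ = a * 𝓕 (⇑g) (ξ * a) := by
    rw [hG, Real.fourier_comp_mul_right _ (inv_ne_zero ha.ne'), inv_inv, abs_of_pos ha,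
      Complex.real_smul]
  have hGeven : (⇑G).Even := fun t ↦ by simp only [hG, neg_mul]; exact heven _
  have hGint : ∫ t, G t = 0 := by
    rw [hG, Measure.integral_comp_mul_right (fun t ↦ g t), hint, smul_zero]
  have := G.tsum_nat_succ_eq_tsum_fourier_of_even hGeven (by simp [hG, h0]) hGint
  simp only [hFG, tsum_mul_left] at this
  simpa only [hG] using this

/-- Poisson summation gives `E(f̂)(x) = E(f)(x⁻¹)` for `x > 0`, where
`f̂` is the Fourier transform and `E(f)(u) = u^{1/2} ∑_{n≥1} f(nu)`. -/
theorem stmt4 (f : SchwartzMap ℝ ℝ) (hf : f ∈ S0ev) (x : ℝ) (hx : 0 < x) :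
    (Real.sqrt x : ℂ) * ∑' n : ℕ,
        FourierTransform.fourier (fun t : ℝ => (f t : ℂ)) (((n : ℝ) + 1) * x) =
      (Real.sqrt x⁻¹ : ℂ) * ∑' n : ℕ, (f (((n : ℝ) + 1) * x⁻¹) : ℂ) := by
  obtain ⟨hev, hf0, hfint⟩ := hf
  let F : 𝓢(ℝ, ℂ) := postcompCLM Complex.ofRealCLM f
  have hF : ⇑F = fun t ↦ (f t : ℂ) := by ext; simp [F]
  have hFeven : (⇑F).Even := fun t ↦ by simp only [hF, hev]
  have hFint : ∫ t, F t = 0 := by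
    simp only [hF]
    rw [integral_complex_ofReal, hfint, Complex.ofReal_zero]
  have key :=
    F.tsum_nat_succ_mul_inv_eq_mul_tsum_fourier_of_even hFeven (by simp [hF, hf0]) hFint hx
  rw [hF] at key
  rw [key, ← mul_assoc]
  congr 1
  rw [Real.sqrt_inv, ← Complex.ofReal_mul, inv_mul_eq_div, Real.div_sqrt]
end

section
/- Let f ∈ S₀^ev and define ψ(z) = ∫₀^∞ f(u) u^{1/2 - iz} d*u (with d*u = du/u). Then for z ∈ ℂ with Im(z) > 1/2, one has ∫₀^∞ E(f)(u) u^{-iz} d*u = ζ(1/2 - iz)·ψ(z), where ζ is the Riemann zeta function and E(f)(u) = u^{1/2}∑_{n≥1} f(nu). -/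
/-!
With `s = 1/2 - iz`, the integral on the left is the Mellin transform at `s` of
`u ↦ ∑ₙ f((n+1)u)`. Since `Re s > 1`, the Mellin integrals of the terms converge absolutely with
total mass `∑ₙ (n+1)^(-Re s) · ∫ u^(Re s - 1) |f u| du < ∞`, so sum and integral may be
interchanged; the substitution `u ↦ (n+1)u` turns the `n`-th term into `(n+1)^(-s) ψ(z)`.
-/

open MeasureTheory Set Complex

open Filter Asymptotics Topology

section Mellin

variable {E : Type*} [NormedAddCommGroup E] [NormedSpace ℂ E]

lemma integral_norm_mellin_integrand_comp_mul_left (g : ℝ → E) (s : ℂ) {a : ℝ} (ha : 0 < a) :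
    ∫ t in Ioi (0 : ℝ), ‖(t : ℂ) ^ (s - 1) • g (a * t)‖ =
      a ^ (-s.re) * ∫ t in Ioi (0 : ℝ), ‖(t : ℂ) ^ (s - 1) • g t‖ := by
  have hrescale : ∀ t ∈ Ioi (0 : ℝ), ‖(t : ℂ) ^ (s - 1) • g (a * t)‖ =
      a ^ (1 - s.re) * ‖((a * t : ℝ) : ℂ) ^ (s - 1) • g (a * t)‖ := by
    intro t (ht : 0 < t)
    rw [norm_smul, norm_smul, ofReal_mul, mul_cpow_ofReal_nonneg ha.le ht.le, norm_mul,
      norm_cpow_eq_rpow_re_of_pos ha, ← mul_assoc, ← mul_assoc, ← Real.rpow_add ha]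
    simp
  rw [setIntegral_congr_fun measurableSet_Ioi hrescale, integral_const_mul,
    integral_comp_mul_left_Ioi (fun t => ‖(t : ℂ) ^ (s - 1) • g t‖) 0 ha, mul_zero, smul_eq_mul,
    ← mul_assoc, ← Real.rpow_neg_one, ← Real.rpow_add ha]
  ring_nf

theorem hasSum_mellin_comp_nat_add_one_mul {g : ℝ → E} {s : ℂ} (hs : 1 < s.re)
    (hg : MellinConvergent g s) :
    HasSum (fun n : ℕ => (1 / ((n : ℂ) + 1) ^ s) • mellin g s)
      (mellin (fun t => ∑' n : ℕ, g ((n + 1) * t)) s) := by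
  have hpos (n : ℕ) : (0 : ℝ) < n + 1 := n.cast_add_one_pos
  have hterm (n : ℕ) :
      mellin (fun t => g ((n + 1) * t)) s = (1 / ((n : ℂ) + 1) ^ s) • mellin g s := by
    rw [mellin_comp_mul_left g s (hpos n), cpow_neg, one_div]
    push_cast; rfl
  have hsum : Summable fun n : ℕ => ∫ t in Ioi (0 : ℝ), ‖(t : ℂ) ^ (s - 1) • g ((n + 1) * t)‖ := by
    simp_rw [integral_norm_mellin_integrand_comp_mul_left g s (hpos _)]
    refine Summable.mul_right _ ?_
    refine ((Real.summable_one_div_nat_add_rpow 1 s.re).mpr hs).congr fun n => ?_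
    rw [abs_of_pos (hpos n), Real.rpow_neg (hpos n).le, one_div]
  have hsum_integral := hasSum_integral_of_summable_integral_norm
    (fun n => (MellinConvergent.comp_mul_left (hpos n)).mpr hg) hsum
  simp_rw [← hterm]
  simpa only [mellin, tsum_const_smul''] using hsum_integral

theorem mellin_tsum_comp_nat_add_one_mul {g : ℝ → E} {s : ℂ} (hs : 1 < s.re)
    (hg : MellinConvergent g s) :
    mellin (fun t => ∑' n : ℕ, g ((n + 1) * t)) s = riemannZeta s • mellin g s := by
  have hζ : HasSum (fun n : ℕ => 1 / ((n : ℂ) + 1) ^ s) (riemannZeta s) := by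
    rw [zeta_eq_tsum_one_div_nat_add_one_cpow hs]
    refine Summable.hasSum ?_
    exact_mod_cast (summable_nat_add_iff 1).mpr (Complex.summable_one_div_nat_cpow.mpr hs)
  exact (hasSum_mellin_comp_nat_add_one_mul hs hg).unique (hζ.smul_const _)

lemma mellinConvergent_of_continuous_of_isBigO_atTop {g : ℝ → E} (hg : Continuous g) {a : ℝ}
    (htop : g =O[atTop] (· ^ (-a))) {s : ℂ} (hs_top : s.re < a) (hs_bot : 0 < s.re) :
    MellinConvergent g s := by
  have hbot : g =O[𝓝[>] 0] (· ^ (-(0 : ℝ))) := by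
    simpa using ((hg.tendsto 0).mono_left nhdsWithin_le_nhds).isBigO_one ℝ
  exact mellinConvergent_of_isBigO_rpow (hg.locallyIntegrable.locallyIntegrableOn _) htop hs_top
    hbot hs_bot

end Mellin

lemma SchwartzMap.isBigO_atTop_rpow {F : Type*} [NormedAddCommGroup F] [NormedSpace ℝ F]
    (f : SchwartzMap ℝ F) (a : ℝ) : f =O[atTop] (· ^ a) := by
  refine ((f.isBigO_cocompact_rpow a).mono atTop_le_cocompact).congr' .rfl ?_
  filter_upwards [eventually_ge_atTop 0] with x hx
  rw [Real.norm_of_nonneg hx]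

theorem stmt5_general (f : SchwartzMap ℝ ℝ) (z : ℂ) (hz : 1 / 2 < z.im) :
    (∫ u in Set.Ioi (0:ℝ),
        ((Real.sqrt u * ∑' n : ℕ, f (((n : ℝ) + 1) * u) : ℝ) : ℂ) *
          (u : ℂ) ^ (-(Complex.I * z)) / (u : ℂ)) =
      riemannZeta (1 / 2 - Complex.I * z) *
        ∫ u in Set.Ioi (0:ℝ), (f u : ℂ) * (u : ℂ) ^ ((1 : ℂ) / 2 - Complex.I * z) / (u : ℂ) := by
  have hs : 1 < (1 / 2 - I * z).re := by
    simp only [one_div, sub_re, inv_re, re_ofNat, normSq_ofNat, div_self_mul_self', mul_re, I_re,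
      zero_mul, I_im, one_mul, zero_sub, sub_neg_eq_add]
    linarith
  have hf : MellinConvergent (fun u : ℝ => (f u : ℂ)) (1 / 2 - I * z) :=
    mellinConvergent_of_continuous_of_isBigO_atTop (continuous_ofReal.comp f.continuous)
      (isBigO_ofReal_left.mpr (f.isBigO_atTop_rpow _)) (lt_add_one _) (by linarith)
  have hLHS : (∫ u in Ioi (0:ℝ), ((Real.sqrt u * ∑' n : ℕ, f (((n : ℝ) + 1) * u) : ℝ) : ℂ) *
      (u : ℂ) ^ (-(I * z)) / (u : ℂ)) =
      mellin (fun u => ∑' n : ℕ, (f ((n + 1) * u) : ℂ)) (1 / 2 - I * z) := by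
    refine setIntegral_congr_fun measurableSet_Ioi fun u (hu : 0 < u) => ?_
    have hu' : (u : ℂ) ≠ 0 := ofReal_ne_zero.mpr hu.ne'
    rw [smul_eq_mul, cpow_sub _ 1 hu', cpow_one, sub_eq_add_neg (1 / 2 : ℂ), cpow_add _ _ hu',
      ofReal_mul, ofReal_tsum, Real.sqrt_eq_rpow, ofReal_cpow hu.le]
    push_cast
    ring
  have hRHS : (∫ u in Ioi (0:ℝ), (f u : ℂ) * (u : ℂ) ^ ((1 : ℂ) / 2 - I * z) / (u : ℂ)) =
      mellin (fun u => (f u : ℂ)) (1 / 2 - I * z) := by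
    refine setIntegral_congr_fun measurableSet_Ioi fun u (hu : 0 < u) => ?_
    rw [smul_eq_mul, cpow_sub _ 1 (ofReal_ne_zero.mpr hu.ne'), cpow_one]
    ring
  rw [hLHS, hRHS, mellin_tsum_comp_nat_add_one_mul hs hf, smul_eq_mul]

/-- for `Im z > 1/2`,
`∫₀^∞ E(f)(u) u^{-iz} d*u = ζ(1/2 - iz) ψ(z)` with `ψ(z) = ∫₀^∞ f(u) u^{1/2-iz} d*u`. -/
theorem stmt5 (f : SchwartzMap ℝ ℝ) (hf : f ∈ S0ev) (z : ℂ) (hz : 1 / 2 < z.im) :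
    (∫ u in Set.Ioi (0:ℝ),
        ((Real.sqrt u * ∑' n : ℕ, f (((n : ℝ) + 1) * u) : ℝ) : ℂ) *
          (u : ℂ) ^ (-(Complex.I * z)) / (u : ℂ)) =
      riemannZeta (1 / 2 - Complex.I * z) *
        ∫ u in Set.Ioi (0:ℝ), (f u : ℂ) * (u : ℂ) ^ ((1 : ℂ) / 2 - Complex.I * z) / (u : ℂ) :=
  stmt5_general f z hz
end

section
/- Fix L > 0 and integers n ≠ m with n, m > 0. Let ξ_n(x) = (-1)^n√(2/L)cos(2πnx/L) and ξ_m(x) = (-1)^m√(2/L)cos(2πmx/L) on [-L/2, L/2], extended by 0. Then for y ∈ [0, L]: ½(ξ_n*ξ_m* + ξ_m*ξ_n*)(y) = (n sin(2πny/L) − m sin(2πmy/L))/(π(m²−n²)). -/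
open MeasureTheory Set

set_option maxHeartbeats 1000000

/-- The cosine basis function `ξ_n(x) = (-1)^n √(2/L) cos(2πnx/L)` on `[-L/2, L/2]`,
extended by `0` outside that interval. -/
noncomputable def xi (L : ℝ) (n : ℕ) (x : ℝ) : ℝ :=
  if x ∈ Set.Icc (-(L / 2)) (L / 2) then
    (-1 : ℝ) ^ n * Real.sqrt (2 / L) * Real.cos (2 * Real.pi * n * x / L)
  else 0

private lemma cos_int_pi (k : ℤ) : Real.cos ((k : ℝ) * Real.pi) = (-1 : ℝ) ^ k := by
  rcases Int.even_or_odd k with ⟨j, hj⟩ | ⟨j, hj⟩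
  · subst hj
    rw [show ((j + j : ℤ) : ℝ) * Real.pi = (j : ℝ) * (2 * Real.pi) by push_cast; ring,
      Real.cos_int_mul_two_pi, show (j + j : ℤ) = 2 * j by ring, zpow_mul]
    norm_num
  · subst hj
    rw [show ((2 * j + 1 : ℤ) : ℝ) * Real.pi = (j : ℝ) * (2 * Real.pi) + Real.pi by
        push_cast; ring,
      Real.cos_int_mul_two_pi_add_pi,
      zpow_add₀ (by norm_num : (-1 : ℝ) ≠ 0), zpow_mul]
    norm_num

private lemma key (L : ℝ) (hL : 0 < L) (n m : ℕ) (hn : 0 < n) (hm : 0 < m) (hnm : n ≠ m)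
    (y : ℝ) (hy : y ∈ Set.Icc (0:ℝ) L) :
    (∫ x, xi L n x * xi L m (x - y)) =
      ((n : ℝ) * Real.sin (2 * Real.pi * n * y / L) -
          (m : ℝ) * Real.sin (2 * Real.pi * m * y / L)) /
        (Real.pi * ((m : ℝ) ^ 2 - (n : ℝ) ^ 2)) := by
  obtain ⟨hy0, hyL⟩ := hy
  have hπ := Real.pi_pos
  set a : ℝ := 2 * Real.pi * n / L with ha
  set b : ℝ := 2 * Real.pi * m / L with hb
  set K : ℝ := (-1 : ℝ) ^ (n + m) * (2 / L) with hK
  have hLne : L ≠ 0 := ne_of_gt hL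
  have hπne : Real.pi ≠ 0 := ne_of_gt hπ
  have hcast : (n : ℝ) ≠ (m : ℝ) := by exact_mod_cast hnm
  have hsum : (n : ℝ) + (m : ℝ) ≠ 0 := by positivity
  have hab1 : a - b ≠ 0 := by
    rw [ha, hb]
    rw [div_sub_div_same]
    apply div_ne_zero _ hLne
    have : (2 : ℝ) * Real.pi * n - 2 * Real.pi * m = 2 * Real.pi * ((n : ℝ) - m) := by ring
    rw [this]
    have := sub_ne_zero.mpr hcast
    positivity
  have hab2 : a + b ≠ 0 := by
    rw [ha, hb]
    have h1 : (0:ℝ) < 2 * Real.pi * n / L := by positivity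
    have h2 : (0:ℝ) < 2 * Real.pi * m / L := by positivity
    positivity
  have h2L : Real.sqrt (2 / L) * Real.sqrt (2 / L) = 2 / L :=
    Real.mul_self_sqrt (by positivity)
  -- Step 1: rewrite the integrand as an indicator
  have hindic : ∀ x : ℝ, xi L n x * xi L m (x - y) =
      Set.indicator (Set.Icc (y - L / 2) (L / 2))
        (fun x => K * (Real.cos (a * x) * Real.cos (b * (x - y)))) x := by
    intro x
    by_cases hx : x ∈ Set.Icc (y - L / 2) (L / 2)
    · have hx1 : x ∈ Set.Icc (-(L / 2)) (L / 2) :=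
        ⟨by have := hx.1; linarith, hx.2⟩
      have hx2 : x - y ∈ Set.Icc (-(L / 2)) (L / 2) :=
        ⟨by have := hx.1; linarith, by have := hx.2; linarith⟩
      rw [Set.indicator_of_mem hx]
      simp only [xi, if_pos hx1, if_pos hx2]
      rw [show 2 * Real.pi * (n : ℝ) * x / L = a * x by rw [ha]; ring,
        show 2 * Real.pi * (m : ℝ) * (x - y) / L = b * (x - y) by rw [hb]; ring,
        hK, pow_add]
      linear_combination
        ((-1:ℝ)^n * (-1)^m * Real.cos (a * x) * Real.cos (b * (x - y))) * h2L
    · rw [Set.indicator_of_notMem hx]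
      simp only [Set.mem_Icc, not_and_or, not_le] at hx
      rcases hx with h | h
      · have : xi L m (x - y) = 0 := by
          rw [xi, if_neg]
          simp only [Set.mem_Icc, not_and_or, not_le]
          left; linarith
        rw [this, mul_zero]
      · have : xi L n x = 0 := by
          rw [xi, if_neg]
          simp only [Set.mem_Icc, not_and_or, not_le]
          right; linarith
        rw [this, zero_mul]
  have hle : y - L / 2 ≤ L / 2 := by linarith
  have step1 : (∫ x, xi L n x * xi L m (x - y)) =
      ∫ x in (y - L / 2)..(L / 2), K * (Real.cos (a * x) * Real.cos (b * (x - y))) := by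
    simp only [hindic]
    rw [MeasureTheory.integral_indicator measurableSet_Icc,
      MeasureTheory.integral_Icc_eq_integral_Ioc,
      ← intervalIntegral.integral_of_le hle]
  rw [step1]
  -- Step 2: evaluate via the fundamental theorem of calculus
  have hderiv : ∀ x ∈ Set.uIcc (y - L / 2) (L / 2),
      HasDerivAt (fun x => K / 2 * (Real.sin ((a - b) * x + b * y) / (a - b) +
        Real.sin ((a + b) * x - b * y) / (a + b)))
        (K * (Real.cos (a * x) * Real.cos (b * (x - y)))) x := by
    intro x _
    have d1 : HasDerivAt (fun x : ℝ => Real.sin ((a - b) * x + b * y))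
        (Real.cos ((a - b) * x + b * y) * (a - b)) x := by
      simpa using ((((hasDerivAt_id x).const_mul (a - b)).add_const (b * y))).sin
    have d2 : HasDerivAt (fun x : ℝ => Real.sin ((a + b) * x - b * y))
        (Real.cos ((a + b) * x - b * y) * (a + b)) x := by
      simpa using ((((hasDerivAt_id x).const_mul (a + b)).sub_const (b * y))).sin
    have := ((d1.div_const (a - b)).add (d2.div_const (a + b))).const_mul (K / 2)
    refine this.congr_deriv ?_
    rw [show (a - b) * x + b * y = a * x - b * (x - y) by ring,
      show (a + b) * x - b * y = a * x + b * (x - y) by ring,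
      Real.cos_sub, Real.cos_add]
    field_simp
    ring
  have hint : IntervalIntegrable
      (fun x => K * (Real.cos (a * x) * Real.cos (b * (x - y)))) volume
      (y - L / 2) (L / 2) := by
    apply Continuous.intervalIntegrable
    fun_prop
  rw [intervalIntegral.integral_eq_sub_of_hasDerivAt hderiv hint]
  -- Step 3: algebra
  have e1 : (a - b) * (L / 2) + b * y = ((((n : ℤ) - m : ℤ)) : ℝ) * Real.pi + b * y := by
    rw [ha, hb]; push_cast; field_simp
  have e2 : (a + b) * (L / 2) - b * y = ((((n : ℤ) + m : ℤ)) : ℝ) * Real.pi + -(b * y) := by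
    rw [ha, hb]; push_cast; field_simp; ring
  have e3 : (a - b) * (y - L / 2) + b * y = a * y - ((((n : ℤ) - m : ℤ)) : ℝ) * Real.pi := by
    rw [ha, hb]; push_cast; field_simp; ring
  have e4 : (a + b) * (y - L / 2) - b * y = a * y - ((((n : ℤ) + m : ℤ)) : ℝ) * Real.pi := by
    rw [ha, hb]; push_cast; field_simp; ring
  have hsin1 : ∀ (k : ℤ) (t : ℝ), Real.sin ((k : ℝ) * Real.pi + t) = (-1 : ℝ) ^ k * Real.sin t := by
    intro k t
    rw [Real.sin_add, Real.sin_int_mul_pi, cos_int_pi]; ring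
  have hsin2 : ∀ (k : ℤ) (t : ℝ), Real.sin (t - (k : ℝ) * Real.pi) = (-1 : ℝ) ^ k * Real.sin t := by
    intro k t
    rw [Real.sin_sub, Real.sin_int_mul_pi, cos_int_pi]; ring
  rw [e1, e2, e3, e4, hsin1, hsin1, hsin2, hsin2, Real.sin_neg]
  have hs1 : (-1 : ℝ) ^ ((n : ℤ) + (m : ℤ)) = (-1 : ℝ) ^ (n + m) := by
    rw [show (n : ℤ) + (m : ℤ) = ((n + m : ℕ) : ℤ) by push_cast; ring, zpow_natCast]
  have hs2 : (-1 : ℝ) ^ ((n : ℤ) - (m : ℤ)) = (-1 : ℝ) ^ (n + m) := by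
    rw [show (n : ℤ) - (m : ℤ) = ((n + m : ℕ) : ℤ) - 2 * m by push_cast; ring,
      zpow_sub₀ (by norm_num : (-1 : ℝ) ≠ 0), zpow_natCast,
      show (2 * (m : ℤ)) = (2 : ℤ) * m by ring, zpow_mul]
    norm_num
  rw [hs1, hs2]
  rw [show 2 * Real.pi * (n : ℝ) * y / L = a * y by rw [ha]; ring,
    show 2 * Real.pi * (m : ℝ) * y / L = b * y by rw [hb]; ring]
  have hsq : (m : ℝ) ^ 2 - (n : ℝ) ^ 2 ≠ 0 := by
    intro h
    have : ((m : ℝ) - n) * ((m : ℝ) + n) = 0 := by linarith [h]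
    rcases mul_eq_zero.mp this with h' | h'
    · exact hcast (by linarith)
    · have : (0:ℝ) < (m : ℝ) + n := by positivity
      linarith
  rw [hK]
  have hd1 : a - b = 2 * Real.pi * ((n : ℝ) - m) / L := by rw [ha, hb]; ring
  have hd2 : a + b = 2 * Real.pi * ((n : ℝ) + m) / L := by rw [ha, hb]; ring
  have hnm' : (n : ℝ) - (m : ℝ) ≠ 0 := sub_ne_zero.mpr hcast
  rcases Nat.even_or_odd (n + m) with hpar | hpar
  · rw [Even.neg_one_pow hpar]
    rw [hd1, hd2, ha, hb]
    field_simp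
    ring
  · rw [Odd.neg_one_pow hpar]
    rw [hd1, hd2, ha, hb]
    field_simp
    ring

/-- for `n ≠ m` positive and `y ∈ [0, L]`,
`½((ξ_n * ξ_m^*)(y) + (ξ_m * ξ_n^*)(y)) = (n sin(2πny/L) - m sin(2πmy/L))/(π(m² - n²))`,
where `(φ * ψ^*)(y) = ∫ φ(x) ψ(x - y) dx` (the `ξ_k` being real and even, `ξ_k^* = ξ_k`). -/
theorem stmt17 (L : ℝ) (hL : 0 < L) (n m : ℕ) (hn : 0 < n) (hm : 0 < m) (hnm : n ≠ m)
    (y : ℝ) (hy : y ∈ Set.Icc (0:ℝ) L) :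
    (1 / 2 : ℝ) * ((∫ x, xi L n x * xi L m (x - y)) + ∫ x, xi L m x * xi L n (x - y)) =
      ((n : ℝ) * Real.sin (2 * Real.pi * n * y / L) -
          (m : ℝ) * Real.sin (2 * Real.pi * m * y / L)) /
        (Real.pi * ((m : ℝ) ^ 2 - (n : ℝ) ^ 2)) := by
  rw [key L hL n m hn hm hnm y hy, key L hL m n hm hn (Ne.symm hnm) y hy]
  have hπ := Real.pi_pos
  have hcast : (n : ℝ) ≠ (m : ℝ) := by exact_mod_cast hnm
  have hsq : (m : ℝ) ^ 2 - (n : ℝ) ^ 2 ≠ 0 := by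
    intro h
    have h0 : ((m : ℝ) - n) * ((m : ℝ) + n) = 0 := by linarith [h]
    rcases mul_eq_zero.mp h0 with h' | h'
    · exact hcast (by linarith)
    · have : (0:ℝ) < (m : ℝ) + n := by positivity
      linarith
  have hsq' : (n : ℝ) ^ 2 - (m : ℝ) ^ 2 ≠ 0 := by
    intro h; exact hsq (by linarith)
  have hπne : Real.pi ≠ 0 := ne_of_gt hπ
  field_simp
  ring
end

section
/- Fix L > 0 and a positive integer n. With ξ_n(x) = (-1)^n√(2/L)cos(2πnx/L) on [-L/2,L/2] extended by 0, one has for y ∈ [0,L]: (ξ_n * ξ_n*)(y) = ((L−y)/L)·cos(2πny/L) − sin(2πny/L)/(2πn). -/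
/-!
With `ω = 2πn/L`, the integrand vanishes outside the overlap `[y - L/2, L/2]` of the two supports,
and on it equals `(2/L) cos(ωx) cos(ω(x - y)) = (1/L) (cos(ωy) + cos(ω(2x - y)))`. The constant
term yields the triangle factor `(L - y)/L`; since `ωL = 2πn`, the oscillating term integrates to
`-sin(ωy)/(2πn)`.
-/

open MeasureTheory Set

open Real

theorem integral_cos_mul_cos_sub {ω : ℝ} (hω : ω ≠ 0) (a b y : ℝ) :
    ∫ x in a..b, cos (ω * x) * cos (ω * (x - y)) =
      (b - a) / 2 * cos (ω * y) + (sin (ω * (2 * b - y)) - sin (ω * (2 * a - y))) / (4 * ω) := by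
  have hprod : ∀ x, cos (ω * x) * cos (ω * (x - y)) =
      cos (ω * y) / 2 + cos (2 * ω * x - ω * y) / 2 := by
    intro x
    rw [show ω * y = ω * x - ω * (x - y) by ring,
      show 2 * ω * x - (ω * x - ω * (x - y)) = ω * x + ω * (x - y) by ring, cos_add, cos_sub]
    ring
  simp_rw [hprod]
  rw [intervalIntegral.integral_add intervalIntegrable_const
      (Continuous.intervalIntegrable (by fun_prop) _ _),
    intervalIntegral.integral_div, intervalIntegral.integral_div, intervalIntegral.integral_const,
    intervalIntegral.integral_comp_mul_sub (fun x => cos x) (mul_ne_zero two_ne_zero hω),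
    integral_cos, smul_eq_mul, smul_eq_mul, show 2 * ω * b - ω * y = ω * (2 * b - y) by ring,
    show 2 * ω * a - ω * y = ω * (2 * a - y) by ring]
  field_simp
  ring

theorem xi_mul_xi_sub_eq_indicator {L : ℝ} (hL : 0 < L) (n : ℕ) {y : ℝ} (hy : 0 ≤ y) (x : ℝ) :
    xi L n x * xi L n (x - y) = (Icc (y - L / 2) (L / 2)).indicator
      (fun x => 2 / L * (cos (2 * π * n * x / L) * cos (2 * π * n * (x - y) / L))) x := by
  have hsupp : x ∈ Icc (-(L / 2)) (L / 2) ∧ x - y ∈ Icc (-(L / 2)) (L / 2) ↔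
      x ∈ Icc (y - L / 2) (L / 2) := by
    simp only [mem_Icc]
    constructor
    · rintro ⟨⟨-, hx⟩, hxy, -⟩
      exact ⟨by linarith, hx⟩
    · rintro ⟨hxy, hx⟩
      exact ⟨⟨by linarith, hx⟩, by linarith, by linarith⟩
  have hsign : ((-1 : ℝ) ^ n) ^ 2 = 1 := by rw [← pow_mul, mul_comm, pow_mul, neg_one_sq, one_pow]
  have hsqrt : sqrt (2 / L) ^ 2 = 2 / L := sq_sqrt (by positivity)
  simp only [xi, ite_zero_mul_ite_zero, hsupp, indicator_apply]
  split_ifs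
  · linear_combination (cos (2 * π * n * x / L) * cos (2 * π * n * (x - y) / L)) *
      (sqrt (2 / L) ^ 2 * hsign + hsqrt)
  · rfl

/-- for a positive integer `n` and `y ∈ [0, L]`,
`(ξ_n * ξ_n^*)(y) = ((L-y)/L) cos(2πny/L) - sin(2πny/L)/(2πn)`,
where `(φ * ψ^*)(y) = ∫ φ(x) ψ(x - y) dx` (and `ξ_n^* = ξ_n`). -/
theorem stmt18 (L : ℝ) (hL : 0 < L) (n : ℕ) (hn : 0 < n)
    (y : ℝ) (hy : y ∈ Set.Icc (0:ℝ) L) :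
    (∫ x, xi L n x * xi L n (x - y)) =
      ((L - y) / L) * Real.cos (2 * Real.pi * n * y / L) -
        Real.sin (2 * Real.pi * n * y / L) / (2 * Real.pi * n) := by
  obtain ⟨hy0, hyL⟩ := hy
  set ω := 2 * π * n / L
  have hω : ω ≠ 0 := by positivity
  have harg : ∀ x, 2 * π * n * x / L = ω * x := fun x => by ring
  have hωL : ω * L = n * (2 * π) := by rw [div_mul_cancel₀ _ hL.ne']; ring
  calc (∫ x, xi L n x * xi L n (x - y))
      = ∫ x in (y - L / 2)..(L / 2), 2 / L * (cos (ω * x) * cos (ω * (x - y))) := by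
        simp_rw [xi_mul_xi_sub_eq_indicator hL n hy0, harg]
        rw [integral_indicator measurableSet_Icc, integral_Icc_eq_integral_Ioc,
          ← intervalIntegral.integral_of_le (by linarith)]
    _ = 2 / L * ((L - y) / 2 * cos (ω * y) +
          (sin (n * (2 * π) - ω * y) - sin (ω * y - n * (2 * π))) / (4 * ω)) := by
        rw [intervalIntegral.integral_const_mul, integral_cos_mul_cos_sub hω, ← hωL]
        ring_nf
    _ = ((L - y) / L) * cos (ω * y) - sin (ω * y) / (ω * L) := by
        rw [sin_nat_mul_two_pi_sub, sin_sub_nat_mul_two_pi]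
        field_simp
        ring
    _ = _ := by rw [harg, hωL]; ring
end
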